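/- arXiv:0812.3734 — 13 statements merged into one kernel-verified Lean document; each statement's English description precedes it below -/
import Mathlib

section
/- Let (X,d) be a metric space, f,g : X → X maps and F,G : X → P_fb(X) set-valued maps with values nonempty bounded closed subsets, such that the pairs {f,F} and {g,G} are occasionally weakly compatible. Let φ : (ℝ⁺)⁵ → ℝ be nonincreasing in its 4th and 5th variables and satisfy φ(t,0,0,t,t) ≥ 0 for all t > 0. Suppose that for all x,y ∈ X with max{d(fx,gy), d(fx,Fx), d(gy,Gy)} > 0 we have φ(d(fx,gy), d(fx,Fx), d(gy,Gy), d(fx,Gy), d(gy,Fx)) < 0. Then there exists a unique point w ∈ X with fw = w = gw, w ∈ Fw and w ∈ Gw. -/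
open Metric

/-- δ(A,B) = sup {d(a,b) : a ∈ A, b ∈ B} -/
noncomputable def setDelta {X : Type*} [MetricSpace X] (A B : Set X) : ℝ :=
  sSup {r | ∃ a ∈ A, ∃ b ∈ B, dist a b = r}

/-- The pair (f,F) is occasionally weakly compatible. -/
def OWC {X : Type*} [MetricSpace X] (f : X → X) (F : X → Set X) : Prop :=
  ∃ u, f u ∈ F u ∧ f '' F u ⊆ F (f u)

/-- F takes values in the nonempty bounded closed subsets of X. -/
def Pfb {X : Type*} [MetricSpace X] (F : X → Set X) : Prop :=
  ∀ x, (F x).Nonempty ∧ Bornology.IsBounded (F x) ∧ IsClosed (F x)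

theorem stmt1 {X : Type*} [MetricSpace X] (f g : X → X) (F G : X → Set X)
    (hF : Pfb F) (hG : Pfb G) (howc1 : OWC f F) (howc2 : OWC g G)
    (φ : ℝ → ℝ → ℝ → ℝ → ℝ → ℝ)
    (hφ4 : ∀ t1 t2 t3 t4 t4' t5, 0 ≤ t1 → 0 ≤ t2 → 0 ≤ t3 → 0 ≤ t4 → t4 ≤ t4' → 0 ≤ t5 →
      φ t1 t2 t3 t4' t5 ≤ φ t1 t2 t3 t4 t5)
    (hφ5 : ∀ t1 t2 t3 t4 t5 t5', 0 ≤ t1 → 0 ≤ t2 → 0 ≤ t3 → 0 ≤ t4 → 0 ≤ t5 → t5 ≤ t5' →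
      φ t1 t2 t3 t4 t5' ≤ φ t1 t2 t3 t4 t5)
    (hφ2 : ∀ t : ℝ, 0 < t → 0 ≤ φ t 0 0 t t)
    (hcontr : ∀ x y : X,
      0 < max (dist (f x) (g y)) (max (infDist (f x) (F x)) (infDist (g y) (G y))) →
      φ (dist (f x) (g y)) (infDist (f x) (F x)) (infDist (g y) (G y))
        (infDist (f x) (G y)) (infDist (g y) (F x)) < 0) :
    ∃! w : X, f w = w ∧ g w = w ∧ w ∈ F w ∧ w ∈ G w := by
  -- Key lemma: under zero self-distances and bounds on cross distances, f x = g y.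
  have key : ∀ x y : X, f x ∈ F x → g y ∈ G y →
      infDist (f x) (G y) ≤ dist (f x) (g y) →
      infDist (g y) (F x) ≤ dist (f x) (g y) → f x = g y := by
    intro x y hfx hgy h4 h5
    by_contra hne
    have ht : 0 < dist (f x) (g y) := dist_pos.mpr hne
    have hmax : 0 < max (dist (f x) (g y))
        (max (infDist (f x) (F x)) (infDist (g y) (G y))) :=
      lt_max_of_lt_left ht
    have h := hcontr x y hmax
    rw [infDist_zero_of_mem hfx, infDist_zero_of_mem hgy] at h
    set t := dist (f x) (g y) with htdef
    have h4n : 0 ≤ infDist (f x) (G y) := infDist_nonneg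
    have h5n : 0 ≤ infDist (g y) (F x) := infDist_nonneg
    have step1 : φ t 0 0 t t ≤ φ t 0 0 (infDist (f x) (G y)) t :=
      hφ4 t 0 0 (infDist (f x) (G y)) t t ht.le le_rfl le_rfl h4n h4 ht.le
    have step2 : φ t 0 0 (infDist (f x) (G y)) t ≤
        φ t 0 0 (infDist (f x) (G y)) (infDist (g y) (F x)) :=
      hφ5 t 0 0 (infDist (f x) (G y)) (infDist (g y) (F x)) t ht.le le_rfl le_rfl h4n h5n h5
    have := (step1.trans step2).trans_lt h
    exact absurd (hφ2 t ht) (not_le.mpr this)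
  obtain ⟨u, hfu, hfFu⟩ := howc1
  obtain ⟨v, hgv, hgGv⟩ := howc2
  -- f u = g v
  have huv : f u = g v :=
    key u v hfu hgv (infDist_le_dist_of_mem hgv)
      ((infDist_le_dist_of_mem hfu).trans_eq (dist_comm _ _))
  set w := f u with hw
  -- f w ∈ F w and g w ∈ G w
  have hfwFw : f w ∈ F w := hfFu ⟨f u, hfu, rfl⟩
  have hgwGw : g w ∈ G w := by
    have : g (g v) ∈ G (g v) := hgGv ⟨g v, hgv, rfl⟩
    rwa [← huv] at this
  -- f w = w : apply key to x = w, y = v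
  have hfw : f w = w := by
    have h4 : infDist (f w) (G v) ≤ dist (f w) (g v) := infDist_le_dist_of_mem hgv
    have h5 : infDist (g v) (F w) ≤ dist (f w) (g v) := by
      have := infDist_le_dist_of_mem hfwFw (x := g v)
      rwa [dist_comm (g v)] at this
    have := key w v hfwFw hgv h4 h5
    rw [this, ← huv]
  -- g w = w : apply key to x = u, y = w
  have hgw : g w = w := by
    have h4 : infDist (f u) (G w) ≤ dist (f u) (g w) := infDist_le_dist_of_mem hgwGw
    have h5 : infDist (g w) (F u) ≤ dist (f u) (g w) := by
      have := infDist_le_dist_of_mem hfu (x := g w)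
      rwa [dist_comm (g w)] at this
    have := key u w hfu hgwGw h4 h5
    rw [← this]
  refine ⟨w, ⟨hfw, hgw, ?_, ?_⟩, ?_⟩
  · rwa [hfw] at hfwFw
  · rwa [hgw] at hgwGw
  · rintro w' ⟨hfw', hgw', hFw', hGw'⟩
    have hfFw' : f w' ∈ F w' := by rwa [hfw']
    have hgGw : g w ∈ G w := hgwGw
    have h4 : infDist (f w') (G w) ≤ dist (f w') (g w) := infDist_le_dist_of_mem hgwGw
    have h5 : infDist (g w) (F w') ≤ dist (f w') (g w) := by
      have := infDist_le_dist_of_mem hfFw' (x := g w)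
      rwa [dist_comm (g w)] at this
    have := key w' w hfFw' hgwGw h4 h5
    rwa [hfw', hgw] at this
end

section
/- Let (X,d) be a metric space, f,g : X → X maps and F,G : X → P_fb(X) set-valued maps such that the pairs {f,F} and {g,G} are occasionally weakly compatible. Let φ : (ℝ⁺)⁶ → ℝ be nonincreasing in its 5th and 6th variables and satisfy φ(t',t,0,0,t,t) ≥ 0 for all t' ≥ 0 and all t > 0. Suppose that for all x,y ∈ X with max{d(fx,gy), d(fx,Fx), d(gy,Gy)} > 0 we have φ(H(Fx,Gy), d(fx,gy), d(fx,Fx), d(gy,Gy), d(fx,Gy), d(gy,Fx)) < 0, where H is the Hausdorff distance. Then f, g, F, G have a unique common fixed point. -/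
open Metric

theorem stmt2 {X : Type*} [MetricSpace X] (f g : X → X) (F G : X → Set X)
    (hF : Pfb F) (hG : Pfb G) (howc1 : OWC f F) (howc2 : OWC g G)
    (φ : ℝ → ℝ → ℝ → ℝ → ℝ → ℝ → ℝ)
    (hφ5 : ∀ t1 t2 t3 t4 t5 t5' t6, 0 ≤ t1 → 0 ≤ t2 → 0 ≤ t3 → 0 ≤ t4 → 0 ≤ t5 → t5 ≤ t5' →
      0 ≤ t6 → φ t1 t2 t3 t4 t5' t6 ≤ φ t1 t2 t3 t4 t5 t6)
    (hφ6 : ∀ t1 t2 t3 t4 t5 t6 t6', 0 ≤ t1 → 0 ≤ t2 → 0 ≤ t3 → 0 ≤ t4 → 0 ≤ t5 → 0 ≤ t6 →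
      t6 ≤ t6' → φ t1 t2 t3 t4 t5 t6' ≤ φ t1 t2 t3 t4 t5 t6)
    (hφ2 : ∀ t' t : ℝ, 0 ≤ t' → 0 < t → 0 ≤ φ t' t 0 0 t t)
    (hcontr : ∀ x y : X,
      0 < max (dist (f x) (g y)) (max (infDist (f x) (F x)) (infDist (g y) (G y))) →
      φ (hausdorffDist (F x) (G y)) (dist (f x) (g y)) (infDist (f x) (F x))
        (infDist (g y) (G y)) (infDist (f x) (G y)) (infDist (g y) (F x)) < 0) :
    ∃! w : X, f w = w ∧ g w = w ∧ w ∈ F w ∧ w ∈ G w := by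

  have key : ∀ x y : X, f x ∈ F x → g y ∈ G y → f x = g y := by
    intro x y hx hy
    by_contra hne
    have ht : 0 < dist (f x) (g y) := dist_pos.mpr hne
    have h1 : infDist (f x) (F x) = 0 := infDist_zero_of_mem hx
    have h2 : infDist (g y) (G y) = 0 := infDist_zero_of_mem hy
    have hmax : 0 < max (dist (f x) (g y))
        (max (infDist (f x) (F x)) (infDist (g y) (G y))) := lt_max_of_lt_left ht
    have hc := hcontr x y hmax
    rw [h1, h2] at hc
    have hH : (0:ℝ) ≤ hausdorffDist (F x) (G y) := hausdorffDist_nonneg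
    have hd5 : infDist (f x) (G y) ≤ dist (f x) (g y) := infDist_le_dist_of_mem hy
    have hd6 : infDist (g y) (F x) ≤ dist (f x) (g y) := by
      have h := infDist_le_dist_of_mem (x := g y) hx
      rwa [dist_comm] at h
    have h5n : (0:ℝ) ≤ infDist (f x) (G y) := infDist_nonneg
    have h6n : (0:ℝ) ≤ infDist (g y) (F x) := infDist_nonneg
    have step0 := hφ2 (hausdorffDist (F x) (G y)) (dist (f x) (g y)) hH ht
    have step1 := hφ5 (hausdorffDist (F x) (G y)) (dist (f x) (g y)) 0 0
      (infDist (f x) (G y)) (dist (f x) (g y)) (dist (f x) (g y))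
      hH ht.le le_rfl le_rfl h5n hd5 ht.le
    have step2 := hφ6 (hausdorffDist (F x) (G y)) (dist (f x) (g y)) 0 0
      (infDist (f x) (G y)) (infDist (g y) (F x)) (dist (f x) (g y))
      hH ht.le le_rfl le_rfl h5n h6n hd6
    linarith
  obtain ⟨u, hu, hfu⟩ := howc1
  obtain ⟨v, hv, hgv⟩ := howc2
  have hw0 : f u = g v := key u v hu hv
  have hfwFw : f (f u) ∈ F (f u) := hfu ⟨f u, hu, rfl⟩
  have hgwGw : g (f u) ∈ G (f u) := by rw [hw0]; exact hgv ⟨g v, hv, rfl⟩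
  have hfw : f (f u) = f u := by
    have h := key (f u) v hfwFw hv
    rw [h, hw0]
  have hgw : g (f u) = f u := (key u (f u) hu hgwGw).symm
  rw [hfw] at hfwFw
  rw [hgw] at hgwGw
  refine ⟨f u, ⟨hfw, hgw, hfwFw, hgwGw⟩, ?_⟩
  rintro z ⟨hfz, hgz, hzF, hzG⟩
  have h := key z (f u) (by rw [hfz]; exact hzF) (by rw [hgw]; exact hgwGw)
  rw [hfz, hgw] at h
  exact h
end

section
/- Let (X,d) be a metric space, f,g : X → X maps and F,G : X → P_fb(X) set-valued maps such that the pairs {f,F} and {g,G} are occasionally weakly compatible. Let φ : (ℝ⁺)⁶ → ℝ be nondecreasing in its 1st variable and nonincreasing in its 5th and 6th variables, with φ(t,t,0,0,t,t) ≥ 0 for all t > 0. Suppose for all x,y ∈ X with max{d(fx,gy), d(fx,Fx), d(gy,Gy)} > 0 we have φ(δ(Fx,Gy), d(fx,gy), d(fx,Fx), d(gy,Gy), d(fx,Gy), d(gy,Fx)) < 0. Then f, g, F, G have a unique common fixed point. -/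
open Metric

lemma dist_le_setDelta {X : Type*} [MetricSpace X] {A B : Set X}
    (hA : Bornology.IsBounded A) (hB : Bornology.IsBounded B) {a b : X}
    (ha : a ∈ A) (hb : b ∈ B) : dist a b ≤ setDelta A B := by
  apply le_csSup
  · refine ⟨Metric.diam (A ∪ B), ?_⟩
    rintro r ⟨x, hx, y, hy, rfl⟩
    exact Metric.dist_le_diam_of_mem (hA.union hB) (Or.inl hx) (Or.inr hy)
  · exact ⟨a, ha, b, hb, rfl⟩

theorem stmt3 {X : Type*} [MetricSpace X] (f g : X → X) (F G : X → Set X)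
    (hF : Pfb F) (hG : Pfb G) (howc1 : OWC f F) (howc2 : OWC g G)
    (φ : ℝ → ℝ → ℝ → ℝ → ℝ → ℝ → ℝ)
    (hφ1 : ∀ t1 t1' t2 t3 t4 t5 t6, 0 ≤ t1 → t1 ≤ t1' → 0 ≤ t2 → 0 ≤ t3 → 0 ≤ t4 → 0 ≤ t5 →
      0 ≤ t6 → φ t1 t2 t3 t4 t5 t6 ≤ φ t1' t2 t3 t4 t5 t6)
    (hφ5 : ∀ t1 t2 t3 t4 t5 t5' t6, 0 ≤ t1 → 0 ≤ t2 → 0 ≤ t3 → 0 ≤ t4 → 0 ≤ t5 → t5 ≤ t5' →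
      0 ≤ t6 → φ t1 t2 t3 t4 t5' t6 ≤ φ t1 t2 t3 t4 t5 t6)
    (hφ6 : ∀ t1 t2 t3 t4 t5 t6 t6', 0 ≤ t1 → 0 ≤ t2 → 0 ≤ t3 → 0 ≤ t4 → 0 ≤ t5 → 0 ≤ t6 →
      t6 ≤ t6' → φ t1 t2 t3 t4 t5 t6' ≤ φ t1 t2 t3 t4 t5 t6)
    (hφ2 : ∀ t : ℝ, 0 < t → 0 ≤ φ t t 0 0 t t)
    (hcontr : ∀ x y : X,
      0 < max (dist (f x) (g y)) (max (infDist (f x) (F x)) (infDist (g y) (G y))) →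
      φ (setDelta (F x) (G y)) (dist (f x) (g y)) (infDist (f x) (F x))
        (infDist (g y) (G y)) (infDist (f x) (G y)) (infDist (g y) (F x)) < 0) :
    ∃! w : X, f w = w ∧ g w = w ∧ w ∈ F w ∧ w ∈ G w := by
  -- key: whenever f x ∈ F x and g y ∈ G y, we get f x = g y
  have key : ∀ x y : X, f x ∈ F x → g y ∈ G y → f x = g y := by
    intro x y hx hy
    by_contra hne
    have ht : 0 < dist (f x) (g y) := dist_pos.2 hne
    have hmax : 0 < max (dist (f x) (g y))
        (max (infDist (f x) (F x)) (infDist (g y) (G y))) :=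
      lt_of_lt_of_le ht (le_max_left _ _)
    have hc := hcontr x y hmax
    rw [infDist_zero_of_mem hx, infDist_zero_of_mem hy] at hc
    set t := dist (f x) (g y) with hdef
    have htδ : t ≤ setDelta (F x) (G y) :=
      dist_le_setDelta (hF x).2.1 (hG y).2.1 hx hy
    have h5 : infDist (f x) (G y) ≤ t := infDist_le_dist_of_mem hy
    have h6 : infDist (g y) (F x) ≤ t := by
      have := infDist_le_dist_of_mem (x := g y) hx
      rwa [dist_comm] at this
    have hδ0 : 0 ≤ setDelta (F x) (G y) := le_trans ht.le htδ
    have h05 : (0:ℝ) ≤ infDist (f x) (G y) := infDist_nonneg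
    have h06 : (0:ℝ) ≤ infDist (g y) (F x) := infDist_nonneg
    have c1 : φ t t 0 0 t t ≤ φ (setDelta (F x) (G y)) t 0 0 t t :=
      hφ1 t _ t 0 0 t t ht.le htδ ht.le le_rfl le_rfl ht.le ht.le
    have c2 : φ (setDelta (F x) (G y)) t 0 0 t t ≤
        φ (setDelta (F x) (G y)) t 0 0 (infDist (f x) (G y)) t :=
      hφ5 _ t 0 0 _ t t hδ0 ht.le le_rfl le_rfl h05 h5 ht.le
    have c3 : φ (setDelta (F x) (G y)) t 0 0 (infDist (f x) (G y)) t ≤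
        φ (setDelta (F x) (G y)) t 0 0 (infDist (f x) (G y)) (infDist (g y) (F x)) :=
      hφ6 _ t 0 0 _ _ t hδ0 ht.le le_rfl le_rfl h05 h06 h6
    have := hφ2 t ht
    linarith
  obtain ⟨u, hu1, hu2⟩ := howc1
  obtain ⟨v, hv1, hv2⟩ := howc2
  have huv : f u = g v := key u v hu1 hv1
  have hffu : f (f u) ∈ F (f u) := hu2 ⟨f u, hu1, rfl⟩
  have hggv : g (g v) ∈ G (g v) := hv2 ⟨g v, hv1, rfl⟩
  have hfix : f (f u) = f u := by
    have := key (f u) v hffu hv1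
    rw [this, huv]
  have hgfix : g (g v) = g v := by
    have := key u (g v) hu1 hggv
    rw [← this, huv]
  have hmemF : f u ∈ F (f u) := by have := hffu; rwa [hfix] at this
  have hmemG : g v ∈ G (g v) := by have := hggv; rwa [hgfix] at this
  refine ⟨f u, ⟨hfix, ?_, ?_, ?_⟩, ?_⟩
  · rw [huv]; exact hgfix
  · exact hmemF
  · rw [huv]; exact hmemG
  · rintro w ⟨hfw, hgw, hFw, hGw⟩
    have hgw' : g w ∈ G w := by rw [hgw]; exact hGw
    have h : f (f u) = g w := key (f u) w hffu hgw'
    exact hgw.symm.trans (h.symm.trans hfix)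
end

section
/- Let (X,d) be a metric space, f : X → X and F : X → P_fb(X) with the pair {f,F} occasionally weakly compatible. Let φ : (ℝ⁺)⁶ → ℝ be nondecreasing in its 1st variable, nonincreasing in its 5th and 6th variables, and satisfy φ(t,t,0,0,t,t) ≥ 0 for all t > 0. If φ(δ(Fx,Fy), d(fx,fy), d(fx,Fx), d(fy,Fy), d(fx,Fy), d(fy,Fx)) < 0 for all x,y ∈ X with max{d(fx,fy), d(fx,Fx), d(fy,Fy)} > 0, then there exists a unique w ∈ X with fw = w and w ∈ Fw. -/
open Metric

theorem stmt4 {X : Type*} [MetricSpace X] (f : X → X) (F : X → Set X)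
    (hF : Pfb F) (howc : OWC f F)
    (φ : ℝ → ℝ → ℝ → ℝ → ℝ → ℝ → ℝ)
    (hφ1 : ∀ t1 t1' t2 t3 t4 t5 t6, 0 ≤ t1 → t1 ≤ t1' → 0 ≤ t2 → 0 ≤ t3 → 0 ≤ t4 → 0 ≤ t5 →
      0 ≤ t6 → φ t1 t2 t3 t4 t5 t6 ≤ φ t1' t2 t3 t4 t5 t6)
    (hφ5 : ∀ t1 t2 t3 t4 t5 t5' t6, 0 ≤ t1 → 0 ≤ t2 → 0 ≤ t3 → 0 ≤ t4 → 0 ≤ t5 → t5 ≤ t5' →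
      0 ≤ t6 → φ t1 t2 t3 t4 t5' t6 ≤ φ t1 t2 t3 t4 t5 t6)
    (hφ6 : ∀ t1 t2 t3 t4 t5 t6 t6', 0 ≤ t1 → 0 ≤ t2 → 0 ≤ t3 → 0 ≤ t4 → 0 ≤ t5 → 0 ≤ t6 →
      t6 ≤ t6' → φ t1 t2 t3 t4 t5 t6' ≤ φ t1 t2 t3 t4 t5 t6)
    (hφ2 : ∀ t : ℝ, 0 < t → 0 ≤ φ t t 0 0 t t)
    (hcontr : ∀ x y : X,
      0 < max (dist (f x) (f y)) (max (infDist (f x) (F x)) (infDist (f y) (F y))) →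
      φ (setDelta (F x) (F y)) (dist (f x) (f y)) (infDist (f x) (F x))
        (infDist (f y) (F y)) (infDist (f x) (F y)) (infDist (f y) (F x)) < 0) :
    ∃! w : X, f w = w ∧ w ∈ F w := by
  obtain ⟨u, hu1, hu2⟩ := howc
  have hffu : f (f u) ∈ F (f u) := hu2 ⟨f u, hu1, rfl⟩
  have key : ∀ y : X, f y = y → y ∈ F y → y = f u := by
    intro y hy1 hy2
    by_contra hne
    set t := dist y (f u) with htdef
    have ht : 0 < t := dist_pos.mpr hne
    have h0 : infDist (f u) (F u) = 0 := infDist_zero_of_mem hu1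
    have h0' : infDist (f y) (F y) = 0 := by rw [hy1]; exact infDist_zero_of_mem hy2
    have hδ : t ≤ setDelta (F y) (F u) :=
      dist_le_setDelta (hF y).2.1 (hF u).2.1 hy2 hu1
    have h5 : infDist (f y) (F u) ≤ t := by
      rw [hy1]; exact infDist_le_dist_of_mem hu1
    have h6 : infDist (f u) (F y) ≤ t := by
      rw [dist_comm] at htdef; rw [htdef]; exact infDist_le_dist_of_mem hy2
    have hc := hcontr y u (by
      refine lt_max_iff.mpr (Or.inl ?_)
      rw [hy1]; exact ht)
    rw [h0, h0', hy1] at hc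
    have i5 : 0 ≤ infDist (f y) (F u) := infDist_nonneg
    have i6 : 0 ≤ infDist (f u) (F y) := infDist_nonneg
    have A := hφ2 t ht
    have B := hφ1 t (setDelta (F y) (F u)) t 0 0 t t ht.le hδ ht.le le_rfl le_rfl ht.le ht.le
    have C := hφ5 (setDelta (F y) (F u)) t 0 0 (infDist (f y) (F u)) t t
      (ht.le.trans hδ) ht.le le_rfl le_rfl i5 h5 ht.le
    have D := hφ6 (setDelta (F y) (F u)) t 0 0 (infDist (f y) (F u))
      (infDist (f u) (F y)) t (ht.le.trans hδ) ht.le le_rfl le_rfl i5 i6 h6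
    rw [hy1] at C D
    linarith
  have hfix : f (f u) = f u := by
    by_contra h
    have ht : 0 < dist (f u) (f (f u)) := dist_pos.mpr (fun e => h e.symm)
    set t := dist (f u) (f (f u)) with htdef
    have h0 : infDist (f u) (F u) = 0 := infDist_zero_of_mem hu1
    have h0' : infDist (f (f u)) (F (f u)) = 0 := infDist_zero_of_mem hffu
    have hδ : t ≤ setDelta (F u) (F (f u)) :=
      dist_le_setDelta (hF u).2.1 (hF (f u)).2.1 hu1 hffu
    have h5 : infDist (f u) (F (f u)) ≤ t := infDist_le_dist_of_mem hffu
    have h6 : infDist (f (f u)) (F u) ≤ t := by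
      rw [dist_comm] at htdef; rw [htdef]; exact infDist_le_dist_of_mem hu1
    have hc := hcontr u (f u) (lt_max_iff.mpr (Or.inl ht))
    rw [h0, h0'] at hc
    have i5 : 0 ≤ infDist (f u) (F (f u)) := infDist_nonneg
    have i6 : 0 ≤ infDist (f (f u)) (F u) := infDist_nonneg
    have A := hφ2 t ht
    have B := hφ1 t (setDelta (F u) (F (f u))) t 0 0 t t ht.le hδ ht.le le_rfl le_rfl
      ht.le ht.le
    have C := hφ5 (setDelta (F u) (F (f u))) t 0 0 (infDist (f u) (F (f u))) t t
      (ht.le.trans hδ) ht.le le_rfl le_rfl i5 h5 ht.le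
    have D := hφ6 (setDelta (F u) (F (f u))) t 0 0 (infDist (f u) (F (f u)))
      (infDist (f (f u)) (F u)) t (ht.le.trans hδ) ht.le le_rfl le_rfl i5 i6 h6
    linarith
  refine ⟨f u, ⟨hfix, by rwa [hfix] at hffu⟩, fun y ⟨hy1, hy2⟩ => key y hy1 hy2⟩
end

section
/- Let (X,d) be a metric space, f,g : X → X maps and F,G : X → P_fb(X) set-valued maps such that the pairs {f,F} and {g,G} are occasionally weakly compatible. Let 0 < k ≤ 1. Suppose that for all x,y ∈ X with max{d(fx,gy), d(fx,Fx), d(gy,Gy)} > 0 we have δ(Fx,Gy) < k · max{d(fx,gy), d(fx,Fx), d(gy,Gy), d(fx,Gy), d(gy,Fx)}. Then f, g, F, G have a unique common fixed point. -/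
open Metric

theorem stmt5 {X : Type*} [MetricSpace X] (f g : X → X) (F G : X → Set X)
    (hF : Pfb F) (hG : Pfb G) (howc1 : OWC f F) (howc2 : OWC g G)
    (k : ℝ) (hk0 : 0 < k) (hk1 : k ≤ 1)
    (hcontr : ∀ x y : X,
      0 < max (dist (f x) (g y)) (max (infDist (f x) (F x)) (infDist (g y) (G y))) →
      setDelta (F x) (G y) < k * max (dist (f x) (g y)) (max (infDist (f x) (F x))
        (max (infDist (g y) (G y)) (max (infDist (f x) (G y)) (infDist (g y) (F x)))))) :
    ∃! w : X, f w = w ∧ g w = w ∧ w ∈ F w ∧ w ∈ G w := by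
  have key : ∀ x y : X, f x ∈ F x → g y ∈ G y → f x = g y := by
    intro x y hfx hgy
    by_contra hne
    have hd : 0 < dist (f x) (g y) := dist_pos.2 hne
    have h1 : infDist (f x) (F x) = 0 := infDist_zero_of_mem hfx
    have h2 : infDist (g y) (G y) = 0 := infDist_zero_of_mem hgy
    have hmax : 0 < max (dist (f x) (g y))
        (max (infDist (f x) (F x)) (infDist (g y) (G y))) :=
      lt_of_lt_of_le hd (le_max_left _ _)
    have hc := hcontr x y hmax
    have h3 : infDist (f x) (G y) ≤ dist (f x) (g y) := infDist_le_dist_of_mem hgy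
    have h4 : infDist (g y) (F x) ≤ dist (f x) (g y) := by
      rw [dist_comm]; exact infDist_le_dist_of_mem hfx
    have hMle : max (dist (f x) (g y)) (max (infDist (f x) (F x))
        (max (infDist (g y) (G y)) (max (infDist (f x) (G y)) (infDist (g y) (F x)))))
        ≤ dist (f x) (g y) := by
      rw [h1, h2]
      exact max_le le_rfl (max_le hd.le (max_le hd.le (max_le h3 h4)))
    have hds : dist (f x) (g y) ≤ setDelta (F x) (G y) :=
      dist_le_setDelta (hF x).2.1 (hG y).2.1 hfx hgy
    nlinarith [hc, hMle, hds, hd]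
  obtain ⟨u, hu1, hu2⟩ := howc1
  obtain ⟨v, hv1, hv2⟩ := howc2
  have e1 : f u = g v := key u v hu1 hv1
  have hffu : f (f u) ∈ F (f u) := hu2 ⟨f u, hu1, rfl⟩
  have e2 : f (f u) = g v := key (f u) v hffu hv1
  have hggv : g (g v) ∈ G (g v) := hv2 ⟨g v, hv1, rfl⟩
  have e3 : f u = g (g v) := key u (g v) hu1 hggv
  have hfw : f (f u) = f u := e2.trans e1.symm
  have hgw : g (f u) = f u := by rw [e1, ← e3]; exact e1
  have hwF : f u ∈ F (f u) := by have h := hffu; rwa [hfw] at h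
  have hwG : f u ∈ G (f u) := by
    have h := hggv
    rw [← e1] at h
    rwa [hgw] at h
  refine ⟨f u, ⟨hfw, hgw, hwF, hwG⟩, ?_⟩
  rintro w' ⟨hf', hg', hF', hG'⟩
  have : f w' = g (f u) := key w' (f u) (by rwa [hf']) (by rw [hgw]; exact hwG)
  rw [hf', hgw] at this
  exact this
end

section
/- Let (X,d) be a metric space, f,g : X → X and F,G : X → P_fb(X) with pairs {f,F}, {g,G} occasionally weakly compatible. Let c₁ > 0 and c₂, c₃ ≥ 0 with c₁ + c₃ ≤ 1. Suppose for all x,y ∈ X with max{d(fx,gy), d(fx,Fx), d(gy,Gy)} > 0: δ²(Fx,Gy) < c₁·max{d²(fx,gy), d²(fx,Fx), d²(gy,Gy)} + c₂·max{d(fx,Fx)d(fx,Gy), d(gy,Gy)d(gy,Fx)} + c₃·d(fx,Gy)d(gy,Fx). Then f, g, F, G have a unique common fixed point. -/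
open Metric

lemma eq_of_contr {X : Type*} [MetricSpace X] {F G : Set X}
    (hFb : Bornology.IsBounded F) (hGb : Bornology.IsBounded G)
    {a b : X} (ha : a ∈ F) (hb : b ∈ G) {c₁ c₂ c₃ : ℝ}
    (hc3 : 0 ≤ c₃) (hsum : c₁ + c₃ ≤ 1)
    (h : 0 < max (dist a b) (max (infDist a F) (infDist b G)) →
      (setDelta F G) ^ 2 <
        c₁ * max ((dist a b) ^ 2) (max ((infDist a F) ^ 2) ((infDist b G) ^ 2)) +
        c₂ * max (infDist a F * infDist a G) (infDist b G * infDist b F) +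
        c₃ * (infDist a G * infDist b F)) : a = b := by
  by_contra hne
  have ht : 0 < dist a b := dist_pos.2 hne
  have h0F : infDist a F = 0 := infDist_zero_of_mem ha
  have h0G : infDist b G = 0 := infDist_zero_of_mem hb
  rw [h0F, h0G] at h
  have h' := h (lt_sup_iff.mpr (Or.inl ht))
  simp only [zero_mul, max_self, mul_zero, add_zero] at h'
  rw [max_eq_left (by simpa using sq_nonneg (dist a b) : (0:ℝ)^2 ≤ dist a b ^ 2)] at h'
  have hd : dist a b ≤ setDelta F G := dist_le_setDelta hFb hGb ha hb
  have h1 : infDist a G ≤ dist a b := infDist_le_dist_of_mem hb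
  have h2 : infDist b F ≤ dist a b := by
    rw [dist_comm]; exact infDist_le_dist_of_mem ha
  have h3 : 0 ≤ infDist a G := infDist_nonneg
  have h4 : 0 ≤ infDist b F := infDist_nonneg
  nlinarith [mul_le_mul h1 h2 h4 dist_nonneg, sq_nonneg (dist a b)]

theorem stmt6 {X : Type*} [MetricSpace X] (f g : X → X) (F G : X → Set X)
    (hF : Pfb F) (hG : Pfb G) (howc1 : OWC f F) (howc2 : OWC g G)
    (c₁ c₂ c₃ : ℝ) (hc1 : 0 < c₁) (hc2 : 0 ≤ c₂) (hc3 : 0 ≤ c₃) (hsum : c₁ + c₃ ≤ 1)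
    (hcontr : ∀ x y : X,
      0 < max (dist (f x) (g y)) (max (infDist (f x) (F x)) (infDist (g y) (G y))) →
      (setDelta (F x) (G y)) ^ 2 <
        c₁ * max ((dist (f x) (g y)) ^ 2)
          (max ((infDist (f x) (F x)) ^ 2) ((infDist (g y) (G y)) ^ 2)) +
        c₂ * max (infDist (f x) (F x) * infDist (f x) (G y))
          (infDist (g y) (G y) * infDist (g y) (F x)) +
        c₃ * (infDist (f x) (G y) * infDist (g y) (F x))) :
    ∃! w : X, f w = w ∧ g w = w ∧ w ∈ F w ∧ w ∈ G w := by
  obtain ⟨u, hu1, hu2⟩ := howc1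
  obtain ⟨v, hv1, hv2⟩ := howc2
  -- f u = g v
  have huv : f u = g v :=
    eq_of_contr (hF u).2.1 (hG v).2.1 hu1 hv1 hc3 hsum (hcontr u v)
  set w := f u with hw
  -- f w ∈ F w
  have hfw : f w ∈ F w := hu2 ⟨f u, hu1, rfl⟩
  -- g w ∈ G w
  have hgw : g w ∈ G w := by
    rw [huv]; exact hv2 ⟨g v, hv1, rfl⟩
  -- f w = w
  have hfww : f w = w := by
    have := eq_of_contr (hF w).2.1 (hG v).2.1 hfw hv1 hc3 hsum (hcontr w v)
    rw [this, huv]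
  -- g w = w
  have hgww : g w = w := by
    have := eq_of_contr (hF u).2.1 (hG w).2.1 hu1 hgw hc3 hsum (hcontr u w)
    rw [← this]
  have hwF : w ∈ F w := by nth_rewrite 2 [← hfww]; exact hfw
  have hwG : w ∈ G w := by nth_rewrite 2 [← hgww]; exact hgw
  refine ⟨w, ⟨hfww, hgww, hwF, hwG⟩, ?_⟩
  rintro z ⟨hfz, hgz, hzF, hzG⟩
  have := eq_of_contr (hF w).2.1 (hG z).2.1 (by rw [hfww]; exact hwF)
    (show g z ∈ G z by rw [hgz]; exact hzG) hc3 hsum (hcontr w z)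
  rw [← hfww, this, hgz]
end

section
/- Let (X,d) be a metric space, f,g : X → X and F,G : X → P_fb(X) with pairs {f,F}, {g,G} occasionally weakly compatible. Let α > 0, β, γ, δ₀ ≥ 0 with α + γ + δ₀ ≤ 1 and p ≥ 2 a real number. Suppose for all x,y ∈ X with max{d(fx,gy), d(fx,Fx), d(gy,Gy)} > 0: δ(Fx,Gy) < [α·δ^{p-1}(Fx,Gy)·d(fx,gy) + β·δ^{p-2}(Fx,Gy)·d(fx,Fx)·d(gy,Gy) + γ·d^{p-1}(fx,Gy)·d(gy,Fx) + δ₀·d(fx,Gy)·d^{p-1}(gy,Fx)]^{1/p}. Then f, g, F, G have a unique common fixed point. -/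
open Metric

lemma setDelta_bddAbove {X : Type*} [MetricSpace X] {A B : Set X}
    (hA : Bornology.IsBounded A) (hB : Bornology.IsBounded B) :
    BddAbove {r | ∃ a ∈ A, ∃ b ∈ B, dist a b = r} := by
  obtain ⟨C, hC⟩ := Metric.isBounded_iff.mp (hA.union hB)
  refine ⟨C, ?_⟩
  rintro r ⟨a, ha, b, hb, rfl⟩
  exact hC (Set.mem_union_left _ ha) (Set.mem_union_right _ hb)

theorem stmt7 {X : Type*} [MetricSpace X] (f g : X → X) (F G : X → Set X)
    (hF : Pfb F) (hG : Pfb G) (howc1 : OWC f F) (howc2 : OWC g G)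
    (α β γ δ₀ : ℝ) (hα : 0 < α) (hβ : 0 ≤ β) (hγ : 0 ≤ γ) (hδ : 0 ≤ δ₀)
    (hsum : α + γ + δ₀ ≤ 1) (p : ℝ) (hp : 2 ≤ p)
    (hcontr : ∀ x y : X,
      0 < max (dist (f x) (g y)) (max (infDist (f x) (F x)) (infDist (g y) (G y))) →
      setDelta (F x) (G y) <
        (α * (setDelta (F x) (G y)) ^ (p - 1) * dist (f x) (g y) +
         β * (setDelta (F x) (G y)) ^ (p - 2) * infDist (f x) (F x) * infDist (g y) (G y) +
         γ * (infDist (f x) (G y)) ^ (p - 1) * infDist (g y) (F x) +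
         δ₀ * infDist (f x) (G y) * (infDist (g y) (F x)) ^ (p - 1)) ^ (1 / p)) :
    ∃! w : X, f w = w ∧ g w = w ∧ w ∈ F w ∧ w ∈ G w := by
  have hp0 : (0:ℝ) < p := by linarith
  -- Key lemma: if f x ∈ F x and g y ∈ G y then f x = g y.
  have key : ∀ x y : X, f x ∈ F x → g y ∈ G y → f x = g y := by
    intro x y hx hy
    by_contra hne
    have hd : 0 < dist (f x) (g y) := dist_pos.mpr hne
    have hbF := (hF x).2.1
    have hbG := (hG y).2.1
    set δA := setDelta (F x) (G y) with hδA
    have hdle : dist (f x) (g y) ≤ δA := dist_le_setDelta hbF hbG hx hy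
    have hδpos : 0 < δA := lt_of_lt_of_le hd hdle
    have hiF : infDist (f x) (F x) = 0 := infDist_zero_of_mem hx
    have hiG : infDist (g y) (G y) = 0 := infDist_zero_of_mem hy
    have hmax : 0 < max (dist (f x) (g y))
        (max (infDist (f x) (F x)) (infDist (g y) (G y))) :=
      lt_max_of_lt_left hd
    have hc := hcontr x y hmax
    rw [hiF, hiG] at hc
    set m1 := infDist (f x) (G y) with hm1
    set m2 := infDist (g y) (F x) with hm2
    have hm1nn : 0 ≤ m1 := infDist_nonneg
    have hm2nn : 0 ≤ m2 := infDist_nonneg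
    have hm1le : m1 ≤ δA := (infDist_le_dist_of_mem hy).trans hdle
    have hm2le : m2 ≤ δA := by
      refine (infDist_le_dist_of_mem hx).trans ?_
      rw [dist_comm]; exact hdle
    -- bound the inner expression
    have hEnn : (0:ℝ) ≤ δA ^ (p - 1) := Real.rpow_nonneg hδpos.le _
    have hE : δA ^ (p - 1) * δA = δA ^ p := by
      calc δA ^ (p-1) * δA = δA ^ (p-1) * δA ^ (1:ℝ) := by rw [Real.rpow_one]
        _ = δA ^ (p - 1 + 1) := (Real.rpow_add hδpos _ _).symm
        _ = δA ^ p := by ring_nf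
    have hm1p : m1 ^ (p - 1) ≤ δA ^ (p - 1) :=
      Real.rpow_le_rpow hm1nn hm1le (by linarith)
    have hm2p : m2 ^ (p - 1) ≤ δA ^ (p - 1) :=
      Real.rpow_le_rpow hm2nn hm2le (by linarith)
    have hm1pnn : (0:ℝ) ≤ m1 ^ (p - 1) := Real.rpow_nonneg hm1nn _
    have hm2pnn : (0:ℝ) ≤ m2 ^ (p - 1) := Real.rpow_nonneg hm2nn _
    have hDp : (0:ℝ) < δA ^ p := Real.rpow_pos_of_pos hδpos _
    have hinner : α * δA ^ (p - 1) * dist (f x) (g y) +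
        β * δA ^ (p - 2) * 0 * 0 +
        γ * m1 ^ (p - 1) * m2 + δ₀ * m1 * m2 ^ (p - 1) ≤ δA ^ p := by
      have t1 : α * δA ^ (p - 1) * dist (f x) (g y) ≤ α * δA ^ p := by
        rw [← hE, ← mul_assoc]
        have : α * δA ^ (p-1) * dist (f x) (g y) ≤ α * δA ^ (p-1) * δA :=
          mul_le_mul_of_nonneg_left hdle (by positivity)
        linarith
      have t2 : γ * m1 ^ (p - 1) * m2 ≤ γ * δA ^ p := by
        rw [← hE]
        have : m1 ^ (p-1) * m2 ≤ δA ^ (p-1) * δA :=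
          mul_le_mul hm1p hm2le hm2nn hEnn
        nlinarith
      have t3 : δ₀ * m1 * m2 ^ (p - 1) ≤ δ₀ * δA ^ p := by
        rw [← hE]
        have : m1 * m2 ^ (p-1) ≤ δA * δA ^ (p-1) :=
          mul_le_mul hm1le hm2p hm2pnn hδpos.le
        nlinarith
      nlinarith
    have hinner_nn : (0:ℝ) ≤ α * δA ^ (p - 1) * dist (f x) (g y) +
        β * δA ^ (p - 2) * 0 * 0 +
        γ * m1 ^ (p - 1) * m2 + δ₀ * m1 * m2 ^ (p - 1) := by positivity
    have hfinal : (α * δA ^ (p - 1) * dist (f x) (g y) +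
        β * δA ^ (p - 2) * 0 * 0 +
        γ * m1 ^ (p - 1) * m2 + δ₀ * m1 * m2 ^ (p - 1)) ^ (1/p) ≤ δA := by
      calc _ ≤ (δA ^ p) ^ (1/p) :=
              Real.rpow_le_rpow hinner_nn hinner (by positivity)
        _ = δA := by
              rw [← Real.rpow_mul hδpos.le, mul_one_div, div_self hp0.ne',
                Real.rpow_one]
    exact absurd (lt_of_lt_of_le hc hfinal) (lt_irrefl _)
  obtain ⟨u, hu1, hu2⟩ := howc1
  obtain ⟨v, hv1, hv2⟩ := howc2
  have huv : f u = g v := key u v hu1 hv1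
  -- w := f u
  have hffu : f (f u) ∈ F (f u) := hu2 ⟨f u, hu1, rfl⟩
  have hggv : g (g v) ∈ G (g v) := hv2 ⟨g v, hv1, rfl⟩
  have hggv' : g (f u) ∈ G (f u) := by rw [huv]; exact hggv
  have hfw : f (f u) = f u := (key (f u) v hffu hv1).trans huv.symm
  have hgw : g (f u) = f u := (key u (f u) hu1 hggv').symm
  refine ⟨f u, ⟨hfw, hgw, ?_, ?_⟩, ?_⟩
  · simpa [hfw] using hffu
  · simpa [hgw] using hggv'
  · rintro z ⟨hfz, hgz, hzF, hzG⟩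
    have : f (f u) = g z := key (f u) z hffu (by rwa [hgz])
    rw [hfw, hgz] at this
    exact this.symm
end

section
/- Let (X,d) be a metric space, f,g : X → X and F,G : X → P_fb(X) with pairs {f,F}, {g,G} occasionally weakly compatible. Let α > 0 and β, γ, δ₀, ε ≥ 0 with β + γ ≤ α. Suppose for all x,y ∈ X with max{d(fx,gy), d(fx,Fx), d(gy,Gy)} > 0: δ²(Fx,Gy) < (1/α)·[β·d²(fx,gy) + γ·d(fx,Gy)·d(gy,Fx) / (1 + δ₀·d²(fx,Fx) + ε·d²(gy,Gy))]. Then f, g, F, G have a unique common fixed point. -/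
open Metric

theorem stmt8 {X : Type*} [MetricSpace X] (f g : X → X) (F G : X → Set X)
    (hF : Pfb F) (hG : Pfb G) (howc1 : OWC f F) (howc2 : OWC g G)
    (α β γ δ₀ ε : ℝ) (hα : 0 < α) (hβ : 0 ≤ β) (hγ : 0 ≤ γ) (hδ : 0 ≤ δ₀) (hε : 0 ≤ ε)
    (hsum : β + γ ≤ α)
    (hcontr : ∀ x y : X,
      0 < max (dist (f x) (g y)) (max (infDist (f x) (F x)) (infDist (g y) (G y))) →
      (setDelta (F x) (G y)) ^ 2 <
        (1 / α) * (β * (dist (f x) (g y)) ^ 2 +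
          γ * infDist (f x) (G y) * infDist (g y) (F x) /
            (1 + δ₀ * (infDist (f x) (F x)) ^ 2 + ε * (infDist (g y) (G y)) ^ 2))) :
    ∃! w : X, f w = w ∧ g w = w ∧ w ∈ F w ∧ w ∈ G w := by
  -- Key lemma: whenever f x ∈ F x and g y ∈ G y, we must have f x = g y.
  have key : ∀ x y : X, f x ∈ F x → g y ∈ G y → f x = g y := by
    intro x y hx hy
    by_contra hne
    have hd : 0 < dist (f x) (g y) := dist_pos.mpr hne
    have h1 : infDist (f x) (F x) = 0 := infDist_zero_of_mem hx
    have h2 : infDist (g y) (G y) = 0 := infDist_zero_of_mem hy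
    have hmax : 0 < max (dist (f x) (g y))
        (max (infDist (f x) (F x)) (infDist (g y) (G y))) :=
      lt_of_lt_of_le hd (le_max_left _ _)
    have hc := hcontr x y hmax
    rw [h1, h2] at hc
    have hden : (1 : ℝ) + δ₀ * (0:ℝ) ^ 2 + ε * (0:ℝ) ^ 2 = 1 := by ring
    rw [hden, div_one] at hc
    set D := setDelta (F x) (G y) with hD
    have hDd : dist (f x) (g y) ≤ D := dist_le_setDelta (hF x).2.1 (hG y).2.1 hx hy
    have hD0 : 0 < D := hd.trans_le hDd
    have hi1 : infDist (f x) (G y) ≤ D := le_trans (infDist_le_dist_of_mem hy) hDd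
    have hi2 : infDist (g y) (F x) ≤ D := by
      refine le_trans (infDist_le_dist_of_mem hx) ?_
      rw [dist_comm]; exact hDd
    have hn1 : 0 ≤ infDist (f x) (G y) := infDist_nonneg
    have hn2 : 0 ≤ infDist (g y) (F x) := infDist_nonneg
    have hii : infDist (f x) (G y) * infDist (g y) (F x) ≤ D ^ 2 := by
      have := mul_le_mul hi1 hi2 hn2 hD0.le
      nlinarith
    have hd2 : dist (f x) (g y) ^ 2 ≤ D ^ 2 := by nlinarith [dist_nonneg (x := f x) (y := g y)]
    rw [one_div, inv_mul_eq_div, lt_div_iff₀ hα] at hc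
    nlinarith [mul_le_mul_of_nonneg_left hd2 hβ, mul_le_mul_of_nonneg_left hii hγ,
      mul_le_mul_of_nonneg_right hsum (sq_nonneg D)]
  obtain ⟨u, hu, hfu⟩ := howc1
  obtain ⟨v, hv, hgv⟩ := howc2
  set w := f u with hw
  have hwv : w = g v := key u v hu hv
  -- f (f u) ∈ F (f u)
  have hffu : f w ∈ F w := hfu ⟨f u, hu, rfl⟩
  have hggv : g (g v) ∈ G (g v) := hgv ⟨g v, hv, rfl⟩
  -- f w = w
  have hfw : f w = w := by
    have := key w v hffu hv
    rw [this, hwv]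
  -- g w = w
  have hgw : g w = w := by
    have h := key u (g v) hu hggv
    calc g w = g (g v) := by rw [hwv]
      _ = f u := h.symm
      _ = w := rfl
  have hwF : w ∈ F w := by
    have h := hffu; rw [hfw] at h; exact h
  have hwG : w ∈ G w := by
    have h := hggv
    rw [← hwv] at h
    rw [hgw] at h
    exact h
  refine ⟨w, ⟨hfw, hgw, hwF, hwG⟩, ?_⟩
  rintro w' ⟨hfw', hgw', hwF', hwG'⟩
  have h1 : f w' ∈ F w' := by rw [hfw']; exact hwF'
  have h2 : g w ∈ G w := by rw [hgw]; exact hwG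
  have := key w' w h1 h2
  rw [hfw', hgw] at this
  exact this
end

section
/- Let (X,d) be a metric space, f,g : X → X and F,G : X → P_fb(X) with pairs {f,F}, {g,G} occasionally weakly compatible. Let p ≥ 1 be a natural number, 0 < α ≤ 1 and β, γ ≥ 0. Suppose that for all x,y ∈ X for which the right-hand side is positive: δ^p(Fx,Gy) < α·d^p(fx,gy) + β·d^p(fx,Fx) + γ·d^p(gy,Gy). Then f, g, F, G have a unique common fixed point. -/
open Metric

theorem stmt10 {X : Type*} [MetricSpace X] (f g : X → X) (F G : X → Set X)
    (hF : Pfb F) (hG : Pfb G) (howc1 : OWC f F) (howc2 : OWC g G)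
    (p : ℕ) (hp : 1 ≤ p) (α β γ : ℝ) (hα0 : 0 < α) (hα1 : α ≤ 1) (hβ : 0 ≤ β) (hγ : 0 ≤ γ)
    (hcontr : ∀ x y : X,
      0 < α * (dist (f x) (g y)) ^ p + β * (infDist (f x) (F x)) ^ p +
        γ * (infDist (g y) (G y)) ^ p →
      (setDelta (F x) (G y)) ^ p <
        α * (dist (f x) (g y)) ^ p + β * (infDist (f x) (F x)) ^ p +
          γ * (infDist (g y) (G y)) ^ p) :
    ∃! w : X, f w = w ∧ g w = w ∧ w ∈ F w ∧ w ∈ G w := by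
  obtain ⟨u, hu, hfu⟩ := howc1
  obtain ⟨v, hv, hgv⟩ := howc2
  have hp0 : p ≠ 0 := by omega
  have key : ∀ (x y : X) (a b : X), a ∈ F x → b ∈ G y →
      dist a b ≤ setDelta (F x) (G y) := by
    intro x y a b ha hb
    have hbdd : BddAbove {r | ∃ a ∈ F x, ∃ b ∈ G y, dist a b = r} := by
      obtain ⟨C, hC⟩ := Metric.isBounded_iff.1 ((hF x).2.1.union (hG y).2.1)
      refine ⟨C, ?_⟩
      rintro r ⟨a', ha', b', hb', rfl⟩
      exact hC (Set.mem_union_left _ ha') (Set.mem_union_right _ hb')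
    exact le_csSup hbdd ⟨a, ha, b, hb, rfl⟩
  have eq_of : ∀ x y : X, f x ∈ F x → g y ∈ G y → f x = g y := by
    intro x y hfx hgy
    by_contra hne
    have hd : 0 < dist (f x) (g y) := dist_pos.2 hne
    have h1 : infDist (f x) (F x) = 0 := infDist_zero_of_mem hfx
    have h2 : infDist (g y) (G y) = 0 := infDist_zero_of_mem hgy
    have hr : α * dist (f x) (g y) ^ p + β * infDist (f x) (F x) ^ p +
        γ * infDist (g y) (G y) ^ p = α * dist (f x) (g y) ^ p := by
      rw [h1, h2, zero_pow hp0]; ring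
    have hpos : 0 < α * dist (f x) (g y) ^ p := mul_pos hα0 (pow_pos hd p)
    have hc := hcontr x y (by rw [hr]; exact hpos)
    rw [hr] at hc
    have hle : dist (f x) (g y) ^ p ≤ setDelta (F x) (G y) ^ p :=
      pow_le_pow_left₀ dist_nonneg (key x y _ _ hfx hgy) p
    nlinarith [pow_pos hd p]
  have h1 : f u = g v := eq_of u v hu hv
  have hffu : f (f u) ∈ F (f u) := hfu ⟨f u, hu, rfl⟩
  have h2 : f (f u) = g v := eq_of (f u) v hffu hv
  have hggv : g (g v) ∈ G (g v) := hgv ⟨g v, hv, rfl⟩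
  have h3 : f u = g (g v) := eq_of u (g v) hu hggv
  refine ⟨f u, ⟨?_, ?_, ?_, ?_⟩, ?_⟩
  · rw [h2, ← h1]
  · rw [h1] at h3 ⊢; exact h3.symm
  · have : f (f u) = f u := by rw [h2, ← h1]
    rwa [this] at hffu
  · have hgg : g (g v) = g v := by rw [← h3, h1]
    rw [hgg] at hggv
    rw [h1]; exact hggv
  · rintro y ⟨hfy, hgy, hyF, hyG⟩
    have := eq_of y v (by rw [hfy]; exact hyF) hv
    rw [hfy] at this
    rw [this, h1]
end

section
/- Let (X,d) be a metric space, f,g : X → X, F,G : X → P_fb(X), and let u,v ∈ X satisfy fu ∈ Fu, gv ∈ Gv, f(Fu) ⊆ F(fu), g(Gv) ⊆ G(gv). Let Ψ : ℝ⁺ → ℝ⁺ be nondecreasing with Ψ(t) ≤ t for all t > 0, let 0 < a ≤ 1 and p ≥ 1, and suppose H^p(Fx,Gy) ≤ Ψ(a·d^p(fx,gy) + (1−a)·d^{p/2}(gy,Fx)·d^{p/2}(fx,Gy)) for all x,y ∈ X, where H is the Hausdorff distance. If fu = gv and fu is a common fixed point of f and g (i.e. f(fu) = fu = g(fu)), then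 fu is a common fixed point of f, g, F and G, and Fu = Gv. -/
open Metric

theorem stmt13 {X : Type*} [MetricSpace X] (f g : X → X) (F G : X → Set X)
    (hF : Pfb F) (hG : Pfb G) (u v : X)
    (hu : f u ∈ F u) (hv : g v ∈ G v)
    (hfu : f '' F u ⊆ F (f u)) (hgv : g '' G v ⊆ G (g v))
    (Ψ : ℝ → ℝ) (hΨ0 : ∀ t, 0 ≤ t → 0 ≤ Ψ t)
    (hΨmono : ∀ s t, 0 ≤ s → s ≤ t → Ψ s ≤ Ψ t) (hΨ : ∀ t : ℝ, 0 < t → Ψ t ≤ t)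
    (a : ℝ) (ha0 : 0 < a) (ha1 : a ≤ 1) (p : ℝ) (hp : 1 ≤ p)
    (hcontr : ∀ x y : X,
      (hausdorffDist (F x) (G y)) ^ p ≤
        Ψ (a * (dist (f x) (g y)) ^ p +
          (1 - a) * (infDist (g y) (F x)) ^ (p / 2) * (infDist (f x) (G y)) ^ (p / 2)))
    (heq : f u = g v) (hfix : f (f u) = f u ∧ g (f u) = f u) :
    (f (f u) = f u ∧ g (f u) = f u ∧ f u ∈ F (f u) ∧ f u ∈ G (f u)) ∧ F u = G v := by
  obtain ⟨hf1, hg1⟩ := hfix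
  have hp0 : (0:ℝ) < p := lt_of_lt_of_le one_pos hp
  -- f u ∈ F (f u)
  have hFfu : f u ∈ F (f u) := by
    have : f (f u) ∈ F (f u) := hfu ⟨f u, hu, rfl⟩
    rwa [hf1] at this
  -- f u ∈ G (f u)
  have hGfu : f u ∈ G (f u) := by
    have h1 : g (g v) ∈ G (g v) := hgv ⟨g v, hv, rfl⟩
    have h2 : g (g v) = f u := by rw [← heq, hg1]
    rw [heq] at h2
    rw [heq]
    rwa [h2] at h1
  -- Ψ 0 = 0
  have hΨ00 : Ψ 0 ≤ 0 := by
    by_contra h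
    push_neg at h
    have h1 : Ψ 0 ≤ Ψ (Ψ 0 / 2) := hΨmono 0 (Ψ 0 / 2) le_rfl (by linarith)
    have h2 : Ψ (Ψ 0 / 2) ≤ Ψ 0 / 2 := hΨ _ (by linarith)
    linarith
  -- the contraction at (u, v)
  have hd0 : dist (f u) (g v) = 0 := by rw [heq, dist_self]
  have hi0 : infDist (g v) (F u) = 0 := by
    rw [← heq]; exact infDist_zero_of_mem hu
  have harg : a * (dist (f u) (g v)) ^ p +
      (1 - a) * (infDist (g v) (F u)) ^ (p / 2) * (infDist (f u) (G v)) ^ (p / 2) = 0 := by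
    rw [hd0, hi0, Real.zero_rpow (ne_of_gt hp0), Real.zero_rpow (by positivity : p / 2 ≠ 0)]
    ring
  have hH : hausdorffDist (F u) (G v) ^ p ≤ 0 := by
    have := hcontr u v
    rw [harg] at this
    linarith
  have hH0 : hausdorffDist (F u) (G v) = 0 := by
    by_contra h
    have hpos : 0 < hausdorffDist (F u) (G v) :=
      lt_of_le_of_ne hausdorffDist_nonneg (Ne.symm h)
    have : 0 < hausdorffDist (F u) (G v) ^ p := Real.rpow_pos_of_pos hpos p
    linarith
  have hne : EMetric.hausdorffEdist (F u) (G v) ≠ ⊤ :=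
    hausdorffEdist_ne_top_of_nonempty_of_bounded (hF u).1 (hG v).1 (hF u).2.1 (hG v).2.1
  have hFu : F u = G v :=
    ((hF u).2.2.hausdorffDist_zero_iff_eq (hG v).2.2 hne).1 hH0
  exact ⟨⟨hf1, hg1, hFfu, hGfu⟩, hFu⟩
end

section
/- Let (X,d) be a metric space, f : X → X and F : X → P_fb(X) with the pair {f,F} occasionally weakly compatible. Let Ψ : ℝ⁺ → ℝ⁺ be nondecreasing with Ψ(t) < t for all t > 0, let 0 < a ≤ 1, α, β ∈ (0,1] and p ≥ 1. Suppose for all x,y ∈ X: δ^p(Fx,Fy) ≤ Ψ(a·d^p(fx,fy) + (1−a)·max{α·d^p(fx,Fx), β·d^p(fy,Fy), d^{p/2}(fx,Fx)·d^{p/2}(fy,Fx), d^{p/2}(fy,Fx)·d^{p/2}(fx,Fy), (d^p(fx,Fx)+d^p(fy,Fy))/2}). Then there exists a unique w with fw = w and w ∈ Fw. -/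
open Metric

theorem stmt15 {X : Type*} [MetricSpace X] (f : X → X) (F : X → Set X)
    (hF : Pfb F) (howc : OWC f F)
    (Ψ : ℝ → ℝ) (hΨ0 : ∀ t, 0 ≤ t → 0 ≤ Ψ t)
    (hΨmono : ∀ s t, 0 ≤ s → s ≤ t → Ψ s ≤ Ψ t) (hΨ : ∀ t : ℝ, 0 < t → Ψ t < t)
    (a α β : ℝ) (ha0 : 0 < a) (ha1 : a ≤ 1) (hα0 : 0 < α) (hα1 : α ≤ 1)
    (hβ0 : 0 < β) (hβ1 : β ≤ 1) (p : ℝ) (hp : 1 ≤ p)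
    (hcontr : ∀ x y : X,
      (setDelta (F x) (F y)) ^ p ≤
        Ψ (a * (dist (f x) (f y)) ^ p + (1 - a) *
          max (α * (infDist (f x) (F x)) ^ p)
           (max (β * (infDist (f y) (F y)) ^ p)
            (max ((infDist (f x) (F x)) ^ (p / 2) * (infDist (f y) (F x)) ^ (p / 2))
             (max ((infDist (f y) (F x)) ^ (p / 2) * (infDist (f x) (F y)) ^ (p / 2))
              (((infDist (f x) (F x)) ^ p + (infDist (f y) (F y)) ^ p) / 2)))))) :
    ∃! w : X, f w = w ∧ w ∈ F w := by
  have hp0 : 0 < p := lt_of_lt_of_le one_pos hp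
  -- dist bound for setDelta
  have hbdd : ∀ x y : X, ∀ u ∈ F x, ∀ v ∈ F y, dist u v ≤ setDelta (F x) (F y) := by
    intro x y u hu v hv
    apply le_csSup
    · obtain ⟨C, hC⟩ := Metric.isBounded_iff.1 ((hF x).2.1.union (hF y).2.1)
      exact ⟨C, fun r ⟨a', ha', b', hb', hr⟩ => hr ▸ hC (Or.inl ha') (Or.inr hb')⟩
    · exact ⟨u, hu, v, hv, rfl⟩
  -- key lemma : if f x ∈ F x and f y ∈ F y then f x = f y
  have key : ∀ x y : X, f x ∈ F x → f y ∈ F y → f x = f y := by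
    intro x y hx hy
    set D : ℝ := dist (f x) (f y) ^ p with hD
    have hxx : infDist (f x) (F x) = 0 := infDist_zero_of_mem hx
    have hyy : infDist (f y) (F y) = 0 := infDist_zero_of_mem hy
    have hDnn : 0 ≤ D := Real.rpow_nonneg dist_nonneg p
    have hzero : (0:ℝ) ^ p = 0 := Real.zero_rpow (ne_of_gt hp0)
    have hhalf : (0:ℝ) ≤ p / 2 := by linarith
    -- bound term 3
    have ht3 : infDist (f x) (F x) ^ (p/2) * infDist (f y) (F x) ^ (p/2) ≤ D := by
      rw [hxx, Real.zero_rpow (by positivity : p/2 ≠ 0), zero_mul]; exact hDnn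
    -- bound term 4
    have ht4 : infDist (f y) (F x) ^ (p/2) * infDist (f x) (F y) ^ (p/2) ≤ D := by
      have h1 : infDist (f y) (F x) ^ (p/2) ≤ dist (f y) (f x) ^ (p/2) :=
        Real.rpow_le_rpow infDist_nonneg (infDist_le_dist_of_mem hx) hhalf
      have h2 : infDist (f x) (F y) ^ (p/2) ≤ dist (f x) (f y) ^ (p/2) :=
        Real.rpow_le_rpow infDist_nonneg (infDist_le_dist_of_mem hy) hhalf
      have := mul_le_mul h1 h2 (Real.rpow_nonneg infDist_nonneg _)
        (Real.rpow_nonneg dist_nonneg _)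
      calc infDist (f y) (F x) ^ (p/2) * infDist (f x) (F y) ^ (p/2)
          ≤ dist (f y) (f x) ^ (p/2) * dist (f x) (f y) ^ (p/2) := this
        _ = dist (f x) (f y) ^ (p/2) * dist (f x) (f y) ^ (p/2) := by
            rw [dist_comm]
        _ = dist (f x) (f y) ^ (p/2 + p/2) :=
            (Real.rpow_add' dist_nonneg (by positivity)).symm
        _ = D := by rw [hD]; norm_num
    have hmax : max (α * (infDist (f x) (F x)) ^ p)
           (max (β * (infDist (f y) (F y)) ^ p)
            (max ((infDist (f x) (F x)) ^ (p / 2) * (infDist (f y) (F x)) ^ (p / 2))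
             (max ((infDist (f y) (F x)) ^ (p / 2) * (infDist (f x) (F y)) ^ (p / 2))
              (((infDist (f x) (F x)) ^ p + (infDist (f y) (F y)) ^ p) / 2)))) ≤ D := by
      have ht1 : α * infDist (f x) (F x) ^ p ≤ D := by
        rw [hxx, hzero, mul_zero]; exact hDnn
      have ht2 : β * infDist (f y) (F y) ^ p ≤ D := by
        rw [hyy, hzero, mul_zero]; exact hDnn
      have ht5 : (infDist (f x) (F x) ^ p + infDist (f y) (F y) ^ p) / 2 ≤ D := by
        rw [hxx, hyy, hzero]; linarith
      exact max_le ht1 (max_le ht2 (max_le ht3 (max_le ht4 ht5)))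
    have hmaxnn : (0:ℝ) ≤ max (α * (infDist (f x) (F x)) ^ p)
           (max (β * (infDist (f y) (F y)) ^ p)
            (max ((infDist (f x) (F x)) ^ (p / 2) * (infDist (f y) (F x)) ^ (p / 2))
             (max ((infDist (f y) (F x)) ^ (p / 2) * (infDist (f x) (F y)) ^ (p / 2))
              (((infDist (f x) (F x)) ^ p + (infDist (f y) (F y)) ^ p) / 2)))) := by
      have : (0:ℝ) ≤ α * (infDist (f x) (F x)) ^ p :=
        mul_nonneg hα0.le (Real.rpow_nonneg infDist_nonneg p)
      exact le_trans this (le_max_left _ _)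
    set M := max (α * (infDist (f x) (F x)) ^ p)
           (max (β * (infDist (f y) (F y)) ^ p)
            (max ((infDist (f x) (F x)) ^ (p / 2) * (infDist (f y) (F x)) ^ (p / 2))
             (max ((infDist (f y) (F x)) ^ (p / 2) * (infDist (f x) (F y)) ^ (p / 2))
              (((infDist (f x) (F x)) ^ p + (infDist (f y) (F y)) ^ p) / 2))))
    have hargnn : 0 ≤ a * D + (1 - a) * M :=
      add_nonneg (mul_nonneg ha0.le hDnn) (mul_nonneg (by linarith) hmaxnn)
    have hargle : a * D + (1 - a) * M ≤ D := by nlinarith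
    have hlow : D ≤ setDelta (F x) (F y) ^ p :=
      Real.rpow_le_rpow dist_nonneg (hbdd x y _ hx _ hy) hp0.le
    have hchain : D ≤ Ψ D := by
      calc D ≤ setDelta (F x) (F y) ^ p := hlow
        _ ≤ Ψ (a * D + (1 - a) * M) := hcontr x y
        _ ≤ Ψ D := hΨmono _ _ hargnn hargle
    have hd0 : dist (f x) (f y) = 0 := by
      by_contra h
      have hdpos : 0 < dist (f x) (f y) := lt_of_le_of_ne dist_nonneg (Ne.symm h)
      have hDpos : 0 < D := Real.rpow_pos_of_pos hdpos p
      exact absurd hchain (not_le.2 (hΨ D hDpos))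
    exact dist_eq_zero.1 hd0
  obtain ⟨u, hu, hu2⟩ := howc
  have hwFw : f (f u) ∈ F (f u) := hu2 ⟨f u, hu, rfl⟩
  have hfix : f (f u) = f u := key (f u) u hwFw hu
  refine ⟨f u, ⟨hfix, ?_⟩, ?_⟩
  · have h := hwFw; rw [hfix] at h; exact h
  · rintro z ⟨hz1, hz2⟩
    have hz3 : f z ∈ F z := by rw [hz1]; exact hz2
    have : f (f u) = f z := key (f u) z hwFw hz3
    rw [hfix] at this
    rw [this, hz1]
end

section
/- Let (X,d) be a metric space, f,g : X → X and F,G : X → P_fb(X) with pairs {f,F}, {g,G} occasionally weakly compatible. Let Φ : [0,∞) → [0,∞) be nondecreasing with Φ(t) = 0 iff t = 0, and let α, β, γ : [0,∞) → [0,1) satisfy α(t) + β(t) + γ(t) < 1 for all t > 0. Suppose for all x,y ∈ X: Φ(δ(Fx,Gy)) ≤ α(d(fx,gy))·Φ(d(fx,gy)) + β(d(fx,gy))·[Φ(d(fx,Gy)) + Φ(d(gy,Gy))] + γ(d(fx,gy))·[Φ(d(fx,Fx)) + Φ(d(gy,Fx))]. Then f, g, F, G have a unique common fixed point. -/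
open Metric

theorem stmt16 {X : Type*} [MetricSpace X] (f g : X → X) (F G : X → Set X)
    (hF : Pfb F) (hG : Pfb G) (howc1 : OWC f F) (howc2 : OWC g G)
    (Φ : ℝ → ℝ) (hΦ0 : ∀ t, 0 ≤ t → 0 ≤ Φ t)
    (hΦmono : ∀ s t, 0 ≤ s → s ≤ t → Φ s ≤ Φ t)
    (hΦzero : ∀ t, 0 ≤ t → (Φ t = 0 ↔ t = 0))
    (α β γ : ℝ → ℝ)
    (hα : ∀ t, 0 ≤ t → 0 ≤ α t ∧ α t < 1) (hβ : ∀ t, 0 ≤ t → 0 ≤ β t ∧ β t < 1)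
    (hγ : ∀ t, 0 ≤ t → 0 ≤ γ t ∧ γ t < 1)
    (hsum : ∀ t : ℝ, 0 < t → α t + β t + γ t < 1)
    (hcontr : ∀ x y : X,
      Φ (setDelta (F x) (G y)) ≤
        α (dist (f x) (g y)) * Φ (dist (f x) (g y)) +
        β (dist (f x) (g y)) * (Φ (infDist (f x) (G y)) + Φ (infDist (g y) (G y))) +
        γ (dist (f x) (g y)) * (Φ (infDist (f x) (F x)) + Φ (infDist (g y) (F x)))) :
    ∃! w : X, f w = w ∧ g w = w ∧ w ∈ F w ∧ w ∈ G w := by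
  have Φ00 : Φ 0 = 0 := (hΦzero 0 le_rfl).mpr rfl
  have key : ∀ x y, f x ∈ F x → g y ∈ G y → f x = g y := by
    intro x y hx hy
    by_contra hne
    set t := dist (f x) (g y) with ht
    have ht0 : 0 < t := dist_pos.mpr hne
    have hΦtne : Φ t ≠ 0 := fun h => ht0.ne' ((hΦzero t ht0.le).mp h)
    have hΦt : 0 < Φ t := lt_of_le_of_ne (hΦ0 t ht0.le) (Ne.symm hΦtne)
    have h1 : t ≤ setDelta (F x) (G y) :=
      dist_le_setDelta (hF x).2.1 (hG y).2.1 hx hy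
    have h2 : Φ t ≤ Φ (setDelta (F x) (G y)) := hΦmono _ _ dist_nonneg h1
    have h3 := hcontr x y
    have e1 : Φ (infDist (f x) (G y)) ≤ Φ t :=
      hΦmono _ _ infDist_nonneg (infDist_le_dist_of_mem hy)
    have e2 : Φ (infDist (g y) (G y)) = 0 := by rw [infDist_zero_of_mem hy]; exact Φ00
    have e3 : Φ (infDist (f x) (F x)) = 0 := by rw [infDist_zero_of_mem hx]; exact Φ00
    have e4 : Φ (infDist (g y) (F x)) ≤ Φ t := by
      have h5 : infDist (g y) (F x) ≤ dist (g y) (f x) := infDist_le_dist_of_mem hx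
      calc Φ (infDist (g y) (F x)) ≤ Φ (dist (g y) (f x)) :=
            hΦmono _ _ infDist_nonneg h5
        _ = Φ t := by rw [dist_comm]
    obtain ⟨hα0, -⟩ := hα t ht0.le
    obtain ⟨hβ0, -⟩ := hβ t ht0.le
    obtain ⟨hγ0, -⟩ := hγ t ht0.le
    rw [e2, e3] at h3
    have hbound : Φ t ≤ (α t + β t + γ t) * Φ t := by
      have b1 : β t * (Φ (infDist (f x) (G y)) + 0) ≤ β t * (Φ t + 0) :=
        mul_le_mul_of_nonneg_left (by linarith) hβ0
      have b2 : γ t * (0 + Φ (infDist (g y) (F x))) ≤ γ t * (0 + Φ t) :=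
        mul_le_mul_of_nonneg_left (by linarith) hγ0
      calc Φ t ≤ _ := h2.trans h3
        _ ≤ α t * Φ t + β t * (Φ t + 0) + γ t * (0 + Φ t) := by
            exact add_le_add (add_le_add le_rfl b1) b2
        _ = (α t + β t + γ t) * Φ t := by ring
    have hlt : (α t + β t + γ t) * Φ t < 1 * Φ t :=
      mul_lt_mul_of_pos_right (hsum t ht0) hΦt
    linarith
  obtain ⟨u, hfu, hfFu⟩ := howc1
  obtain ⟨v, hgv, hgGv⟩ := howc2
  have hw1 : f u = g v := key u v hfu hgv
  set w := f u with hwdef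
  have hfw : f w ∈ F w := hfFu ⟨f u, hfu, rfl⟩
  have hgw : g w ∈ G w := by
    have : g (g v) ∈ G (g v) := hgGv ⟨g v, hgv, rfl⟩
    rwa [← hw1] at this
  have hfww : f w = w := by
    have := key w v hfw hgv
    rw [this, ← hw1]
  have hgww : g w = w := (key u w hfu hgw).symm
  have hwF : w ∈ F w := by rwa [hfww] at hfw
  have hwG : w ∈ G w := by rwa [hgww] at hgw
  refine ⟨w, ⟨hfww, hgww, hwF, hwG⟩, ?_⟩
  rintro w' ⟨hf', hg', hF', hG'⟩
  have := key w w' (by rw [hfww]; exact hwF) (by rw [hg']; exact hG')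
  rw [hfww, hg'] at this
  exact this.symm
end

section
/- Let (X,d) be a metric space, f,g : X → X and F,G : X → P_fb(X) with pairs {f,F}, {g,G} occasionally weakly compatible. Let Φ : [0,∞) → [0,∞) be nondecreasing with Φ(t) = 0 iff t = 0, and let α, β, γ : [0,∞) → [0,1) satisfy α(t) + β(t) + γ(t) < 1 for all t > 0. Suppose for all x,y ∈ X: Φ(δ(Fx,Gy)) ≤ α(d(fx,gy))·Φ(d(fx,gy)) + β(d(fx,gy))·max{Φ(d(fx,Gy)), Φ(d(gy,Gy))} + γ(d(fx,gy))·[Φ(d(fx,Fx)) + Φ(d(gy,Fx))]. Then f, g, F, G have a unique common fixed point. -/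
open Metric

theorem stmt17 {X : Type*} [MetricSpace X] (f g : X → X) (F G : X → Set X)
    (hF : Pfb F) (hG : Pfb G) (howc1 : OWC f F) (howc2 : OWC g G)
    (Φ : ℝ → ℝ) (hΦ0 : ∀ t, 0 ≤ t → 0 ≤ Φ t)
    (hΦmono : ∀ s t, 0 ≤ s → s ≤ t → Φ s ≤ Φ t)
    (hΦzero : ∀ t, 0 ≤ t → (Φ t = 0 ↔ t = 0))
    (α β γ : ℝ → ℝ)
    (hα : ∀ t, 0 ≤ t → 0 ≤ α t ∧ α t < 1) (hβ : ∀ t, 0 ≤ t → 0 ≤ β t ∧ β t < 1)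
    (hγ : ∀ t, 0 ≤ t → 0 ≤ γ t ∧ γ t < 1)
    (hsum : ∀ t : ℝ, 0 < t → α t + β t + γ t < 1)
    (hcontr : ∀ x y : X,
      Φ (setDelta (F x) (G y)) ≤
        α (dist (f x) (g y)) * Φ (dist (f x) (g y)) +
        β (dist (f x) (g y)) * max (Φ (infDist (f x) (G y))) (Φ (infDist (g y) (G y))) +
        γ (dist (f x) (g y)) * (Φ (infDist (f x) (F x)) + Φ (infDist (g y) (F x)))) :
    ∃! w : X, f w = w ∧ g w = w ∧ w ∈ F w ∧ w ∈ G w := by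
  have hΦ00 : Φ 0 = 0 := (hΦzero 0 le_rfl).2 rfl
  -- Key lemma: whenever f x ∈ F x and g y ∈ G y, we get f x = g y.
  have key : ∀ x y : X, f x ∈ F x → g y ∈ G y → f x = g y := by
    intro x y hfx hgy
    by_contra hne
    set t := dist (f x) (g y) with ht
    have htpos : 0 < t := dist_pos.2 hne
    have htnn : 0 ≤ t := htpos.le
    have hΦtpos : 0 < Φ t := by
      rcases lt_or_eq_of_le (hΦ0 t htnn) with h | h
      · exact h
      · exact absurd ((hΦzero t htnn).1 h.symm) htpos.ne'
    have hδ : t ≤ setDelta (F x) (G y) :=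
      dist_le_setDelta (hF x).2.1 (hG y).2.1 hfx hgy
    have h1 : Φ t ≤ Φ (setDelta (F x) (G y)) := hΦmono t _ htnn hδ
    have h2 := hcontr x y
    have e1 : infDist (g y) (G y) = 0 := infDist_zero_of_mem hgy
    have e2 : infDist (f x) (F x) = 0 := infDist_zero_of_mem hfx
    have e3 : Φ (infDist (f x) (G y)) ≤ Φ t :=
      hΦmono _ t infDist_nonneg (infDist_le_dist_of_mem hgy)
    have e4 : Φ (infDist (g y) (F x)) ≤ Φ t := by
      apply hΦmono _ t infDist_nonneg
      calc infDist (g y) (F x) ≤ dist (g y) (f x) := infDist_le_dist_of_mem hfx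
        _ = t := dist_comm _ _
    have hmax : max (Φ (infDist (f x) (G y))) (Φ (infDist (g y) (G y))) ≤ Φ t := by
      rw [e1, hΦ00]
      exact max_le e3 hΦtpos.le
    have hγsum : Φ (infDist (f x) (F x)) + Φ (infDist (g y) (F x)) ≤ Φ t := by
      rw [e2, hΦ00, zero_add]; exact e4
    have hfin : Φ t ≤ (α t + β t + γ t) * Φ t := by
      have := h1.trans h2
      have hb := (hβ t htnn).1
      have hg := (hγ t htnn).1
      calc Φ t ≤ α t * Φ t + β t * max (Φ (infDist (f x) (G y))) (Φ (infDist (g y) (G y))) +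
            γ t * (Φ (infDist (f x) (F x)) + Φ (infDist (g y) (F x))) := this
        _ ≤ α t * Φ t + β t * Φ t + γ t * Φ t := by
            gcongr
        _ = (α t + β t + γ t) * Φ t := by ring
    have : Φ t < Φ t := by
      calc Φ t ≤ (α t + β t + γ t) * Φ t := hfin
        _ < 1 * Φ t := by
            exact mul_lt_mul_of_pos_right (hsum t htpos) hΦtpos
        _ = Φ t := one_mul _
    exact lt_irrefl _ this
  obtain ⟨u, hfu, hfFu⟩ := howc1
  obtain ⟨v, hgv, hgGv⟩ := howc2
  have huv : f u = g v := key u v hfu hgv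
  set w := f u with hw
  -- f w ∈ F w
  have hfw : f w ∈ F w := hfFu ⟨f u, hfu, rfl⟩
  -- g w ∈ G w
  have hgw : g w ∈ G w := by
    have : g (g v) ∈ G (g v) := hgGv ⟨g v, hgv, rfl⟩
    rwa [← huv] at this
  -- f w = w
  have hfww : f w = w := by
    have := key w v hfw hgv
    rw [this, ← huv]
  -- g w = w
  have hgww : g w = w := by
    have := key u w hfu hgw
    rw [← this]
  have hwF : w ∈ F w := by rwa [hfww] at hfw
  have hwG : w ∈ G w := by rwa [hgww] at hgw
  refine ⟨w, ⟨hfww, hgww, hwF, hwG⟩, ?_⟩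
  rintro w' ⟨hfw', hgw', hFw', hGw'⟩
  have h := key w w' hfw (by rw [hgw']; exact hGw')
  rw [hfww, hgw'] at h
  exact h.symm
end
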